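/- Let H ≤ G = ∏_{x∈E} Γ_x with |E| = n, let X = Γ_1 ∗ ⋯ ∗ Γ_n be the join of the groups as vertex sets with the coordinatewise right H-action, and X/H the quotient simplicial poset. Then dim_ℂ H_{n−1}(X/H; ℂ) = Σ_{ρ ∈ R(H), triv(ρ) = ∅} dim ρ = χ_{P(H)^{*α}}(|Γ|) when all Γ_x = Γ; more generally the reduced Euler characteristic of X/H equals (−1)^{n−1} Σ_{S⊆E} (−1)^{|E\S|} b^{r*(E) − r*(E\S)} = (−1)^{n−1} χ_{P(H)^{*α}}(b) where α_x = log_b|Γ_x|, i.e., (−1)^{n−1} Σ_{S⊆E} (−1)^{|S|−1} |G_S|/|H_S| computes χ of the α-dual at b. -/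

import Mathlib

/-- Coordinate projection of a product of groups onto the coordinates in `S`. -/
def proj {E : Type} (Γ : E → Type) [∀ x, Group (Γ x)] (S : Finset E) :
    (∀ x, Γ x) →* (∀ x : S, Γ x) :=
  Pi.monoidHom fun i => Pi.evalMonoidHom Γ i

/-- Irreducibility of a representation. -/
def IsIrred {k G V : Type} [CommSemiring k] [Monoid G]
    [AddCommMonoid V] [Module k V] (ρ : Representation k G V) : Prop :=
  Nontrivial V ∧
    ∀ p : Submodule k V, (∀ g : G, ∀ v ∈ p, ρ g v ∈ p) → p = ⊥ ∨ p = ⊤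

/-- The tensor factor of `ρ` at the coordinate `x` is trivial, i.e. the
`x`-th coordinate subgroup acts trivially. -/
def TrivAt {E : Type} (Γ : E → Type) [∀ x, Group (Γ x)] {V : Type}
    [AddCommGroup V] [Module ℂ V]
    (ρ : Representation ℂ (∀ x, Γ x) V) (x : E) : Prop :=
  ∀ g : ∀ y, Γ y, (∀ y, y ≠ x → g y = 1) → ρ g = 1

open scoped DirectSum

/-!
For `T ⊆ E` let `K_T` be the kernel of the projection `G → G_T`; it is normal. The dimension of
the `K_T`-invariants of `ℂ[G/H]` is the number of `K_T`-orbits on `G/H`, which is `[G_T : H_T]`.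
On the other hand, the `K_T`-invariants of an irreducible `ρ` form a `G`-stable subspace, so they
are `0` or all of `ρ`, the latter exactly when `ρ` is trivial on every coordinate outside `T`.
Hence `|G_T| / |H_T| = Σ_{ρ trivial off T} dim ρ`, and `b ^ (r*(E) - r*(S))` is this face count
for `T = E \ S`. Möbius inversion on the Boolean lattice leaves the `ρ` with `triv(ρ) = ∅`, and
the Euler characteristic is the same alternating sum reindexed by complements.
-/

namespace Representation

section CommRing

variable {k G : Type*} [CommRing k] [Group G]

theorem invariants_directSum {ι : Type*} {V : ι → Type*} [∀ i, AddCommGroup (V i)]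
    [∀ i, Module k (V i)] (ρ : ∀ i, Representation k G (V i)) :
    invariants (directSum ρ) =
      LinearMap.range (DirectSum.lmap fun i ↦ (invariants (ρ i)).subtype) := by
  ext v
  simp only [mem_invariants, directSum_apply, DirectSum.range_lmap, Submodule.range_subtype,
    Submodule.mem_comap, Submodule.mem_pi, Set.mem_univ, true_implies, DirectSum.ext_iff,
    DirectSum.lmap_apply, DirectSum.coeFnLinearMap_apply]
  exact forall_comm

theorem finrank_invariants_eq_of_linearEquiv {V W : Type*} [AddCommGroup V] [Module k V]
    [AddCommGroup W] [Module k W] {ρ : Representation k G V} {σ : Representation k G W}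
    (e : V ≃ₗ[k] W) (he : ∀ g v, e (ρ g v) = σ g (e v)) :
    Module.finrank k (invariants ρ) = Module.finrank k (invariants σ) := by
  suffices invariants σ = (invariants ρ).map e.toLinearMap by
    rw [this, LinearEquiv.finrank_map_eq]
  ext w
  obtain ⟨v, rfl⟩ := e.surjective w
  simp [Submodule.mem_map_equiv, ← he]

theorem mem_invariants_ofMulAction_iff {Ω : Type*} [MulAction G Ω] (f : MonoidAlgebra k Ω) :
    f ∈ invariants (ofMulAction k G Ω) ↔ ∀ (g : G) (x : Ω), f.coeff (g • x) = f.coeff x := by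
  simp only [mem_invariants, ← MonoidAlgebra.coeff_inj, Finsupp.ext_iff, coeff_ofMulAction]
  exact ⟨fun h g x ↦ by simpa using h g⁻¹ x, fun h g x ↦ by simpa using h g⁻¹ x⟩

theorem finrank_invariants_ofMulAction [Nontrivial k] {Ω : Type*} [MulAction G Ω] [Finite Ω] :
    Module.finrank k (invariants (ofMulAction k G Ω)) =
      Nat.card (MulAction.orbitRel.Quotient G Ω) := by
  let L : (MulAction.orbitRel.Quotient G Ω → k) →ₗ[k] MonoidAlgebra k Ω :=
    (MonoidAlgebra.coeffLinearEquiv k).symm.toLinearMap ∘ₗ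
      (Finsupp.linearEquivFunOnFinite k k Ω).symm.toLinearMap ∘ₗ
        LinearMap.funLeft k k (Quotient.mk _)
  have coeff_L (φ) (x : Ω) : (L φ).coeff x = φ ⟦x⟧ := rfl
  have hinj : Function.Injective L :=
    (MonoidAlgebra.coeffLinearEquiv k).symm.injective.comp <|
      (Finsupp.linearEquivFunOnFinite k k Ω).symm.injective.comp <|
        LinearMap.funLeft_injective_of_surjective k k _ Quotient.mk''_surjective
  have hrange : LinearMap.range L = invariants (ofMulAction k G Ω) := by
    ext f
    rw [mem_invariants_ofMulAction_iff]
    constructor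
    · rintro ⟨φ, rfl⟩ g x
      simp only [coeff_L, MulAction.orbitRel.Quotient.quotient_smul_eq]
    · refine fun hf ↦ ⟨fun q ↦ f.coeff q.out,
        MonoidAlgebra.coeff_injective (Finsupp.ext fun x ↦ ?_)⟩
      obtain ⟨g, hg⟩ : (⟦x⟧ : MulAction.orbitRel.Quotient G Ω).out ∈ MulAction.orbit G x :=
        MulAction.orbitRel_apply.1 (Quotient.mk_out x)
      rw [coeff_L, ← hg, hf]
  have := Fintype.ofFinite (MulAction.orbitRel.Quotient G Ω)
  rw [← hrange, LinearMap.finrank_range_of_inj hinj, Module.finrank_fintype_fun_eq_card,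
    Nat.card_eq_fintype_card]

variable {V : Type*} [AddCommGroup V] [Module k V]

theorem invariants_comp_subtype_eq_top_iff (ρ : Representation k G V) (N : Subgroup G) :
    invariants (ρ.comp N.subtype) = ⊤ ↔ N ≤ ρ.ker := by
  simp only [Submodule.eq_top_iff', mem_invariants, SetLike.le_def, MonoidHom.mem_ker,
    LinearMap.ext_iff, Module.End.one_apply]
  exact forall_comm.trans Subtype.forall

theorem map_mem_invariants_comp_subtype (ρ : Representation k G V) {N : Subgroup G} [N.Normal]
    (g : G) {v : V} (hv : v ∈ invariants (ρ.comp N.subtype)) :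
    ρ g v ∈ invariants (ρ.comp N.subtype) := by
  rintro ⟨n, hn⟩
  have hconj : g⁻¹ * n * g ∈ N := by simpa using ‹N.Normal›.conj_mem n hn g⁻¹
  calc ρ n (ρ g v) = ρ g (ρ (g⁻¹ * n * g) v) := by
        simp only [← Module.End.mul_apply, ← map_mul, ← mul_assoc, mul_inv_cancel, one_mul]
    _ = ρ g v := congrArg (ρ g) (hv ⟨_, hconj⟩)

end CommRing

section Field

variable {k G : Type*} [Field k] [Group G]

theorem finrank_invariants_directSum {ι : Type*} [Fintype ι] {V : ι → Type*}
    [∀ i, AddCommGroup (V i)] [∀ i, Module k (V i)] [∀ i, FiniteDimensional k (V i)]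
    (ρ : ∀ i, Representation k G (V i)) :
    Module.finrank k (invariants (directSum ρ)) = ∑ i, Module.finrank k (invariants (ρ i)) := by
  rw [invariants_directSum, LinearMap.finrank_range_of_inj, Module.finrank_directSum]
  exact (DirectSum.lmap_injective _).2 fun i ↦ Subtype.val_injective

theorem sum_finrank_invariants_eq_of_linearEquiv {ι : Type*} [Fintype ι] [DecidableEq ι]
    {V : ι → Type*} [∀ i, AddCommGroup (V i)] [∀ i, Module k (V i)]
    [∀ i, FiniteDimensional k (V i)] {W : Type*} [AddCommGroup W] [Module k W]
    (ρ : ∀ i, Representation k G (V i)) (σ : Representation k G W) (e : (⨁ i, V i) ≃ₗ[k] W)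
    (he : ∀ g i v, e (DirectSum.lof k ι V i (ρ i g v)) = σ g (e (DirectSum.lof k ι V i v))) :
    ∑ i, Module.finrank k (invariants (ρ i)) = Module.finrank k (invariants σ) := by
  rw [← finrank_invariants_directSum, finrank_invariants_eq_of_linearEquiv e]
  intro g
  refine LinearMap.congr_fun (?_ : e.toLinearMap ∘ₗ directSum ρ g = σ g ∘ₗ e.toLinearMap)
  exact DirectSum.linearMap_ext k fun i ↦ LinearMap.ext fun v ↦ by simpa using he g i v

end Field

end Representation

open Representation in
theorem IsIrred.finrank_invariants_comp_subtype {k G V : Type} [Field k] [Group G]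
    [AddCommGroup V] [Module k V] {ρ : Representation k G V} (hρ : IsIrred ρ)
    (N : Subgroup G) [N.Normal] [Decidable (N ≤ ρ.ker)] :
    Module.finrank k (invariants (ρ.comp N.subtype)) =
      if N ≤ ρ.ker then Module.finrank k V else 0 := by
  split_ifs with hN
  · rw [(invariants_comp_subtype_eq_top_iff ρ N).2 hN, finrank_top]
  · obtain hbot | htop := hρ.2 _ fun g _ hv ↦ map_mem_invariants_comp_subtype ρ (N := N) g hv
    · rw [hbot, finrank_bot]
    · exact absurd ((invariants_comp_subtype_eq_top_iff ρ N).1 htop) hN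

section OrbitCount

variable {G : Type*} [Group G]

/-- As `N` is normal, the `N`-orbit of `gH` consists of the `H`-cosets inside `g (H ⊔ N)`. -/
theorem card_orbitRel_quotient_eq_index_sup (H N : Subgroup G) [N.Normal] :
    Nat.card (MulAction.orbitRel.Quotient N (G ⧸ H)) = (H ⊔ N).index := by
  let f := Subgroup.quotientMapOfLE (le_sup_left : H ≤ H ⊔ N)
  have hf : Function.Surjective f := by
    rintro ⟨g⟩
    exact ⟨g, rfl⟩
  have hker : Setoid.ker f = MulAction.orbitRel N (G ⧸ H) := by
    ext a b
    induction a using QuotientGroup.induction_on with | H g => ?_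
    induction b using QuotientGroup.induction_on with | H g' => ?_
    rw [Setoid.ker_def, MulAction.orbitRel_apply, MulAction.mem_orbit_iff]
    simp only [f, Subgroup.quotientMapOfLE_apply_mk, QuotientGroup.eq,
      Subgroup.mem_sup_of_normal_right, Subtype.exists]
    constructor
    · rintro ⟨h, hh, n, hn, hgg⟩
      have hg' : g' = g * (h * n) := by rw [hgg]; group
      refine ⟨(g * h) * n⁻¹ * (g * h)⁻¹, ‹N.Normal›.conj_mem _ (inv_mem hn) _, ?_⟩
      change (((g * h) * n⁻¹ * (g * h)⁻¹ * g' : G) : G ⧸ H) = g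
      rw [QuotientGroup.eq]
      convert inv_mem hh using 1
      rw [hg']
      group
    · rintro ⟨n, hn, hH⟩
      change ((n * g' : G) : G ⧸ H) = g at hH
      refine ⟨((n * g')⁻¹ * g)⁻¹, inv_mem (QuotientGroup.eq.1 hH), g'⁻¹ * n⁻¹ * g', ?_, by group⟩
      simpa using ‹N.Normal›.conj_mem _ (inv_mem hn) g'⁻¹
  rw [Subgroup.index, ← Nat.card_congr (Setoid.quotientKerEquivOfSurjective f hf), hker]

theorem card_orbitRel_ker_quotient_eq_index_map {Q : Type*} [Group Q] {φ : G →* Q}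
    (hφ : Function.Surjective φ) (H : Subgroup G) :
    Nat.card (MulAction.orbitRel.Quotient φ.ker (G ⧸ H)) = (H.map φ).index := by
  rw [card_orbitRel_quotient_eq_index_sup, ← Subgroup.comap_map_eq,
    Subgroup.index_comap_of_surjective _ hφ]

end OrbitCount

section Proj

variable {E : Type} (Γ : E → Type) [∀ x, Group (Γ x)]

theorem proj_surjective (T : Finset E) : Function.Surjective (proj Γ T) := by
  classical
  intro h
  exact ⟨fun x ↦ if hx : x ∈ T then h ⟨x, hx⟩ else 1, funext fun i ↦ dif_pos i.2⟩

theorem mem_ker_proj {T : Finset E} {g : ∀ x, Γ x} : g ∈ (proj Γ T).ker ↔ ∀ x ∈ T, g x = 1 := by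
  rw [MonoidHom.mem_ker, funext_iff]
  simp only [Subtype.forall]
  rfl

theorem card_map_proj_empty (H : Subgroup (∀ x, Γ x)) : Nat.card (H.map (proj Γ ∅)) = 1 :=
  Nat.card_unique

theorem ker_proj_le_ker_iff [Finite E] [DecidableEq E] {V : Type} [AddCommGroup V] [Module ℂ V]
    (ρ : Representation ℂ (∀ x, Γ x) V) (T : Finset E) :
    (proj Γ T).ker ≤ ρ.ker ↔ ∀ x ∉ T, TrivAt Γ ρ x := by
  constructor
  · intro hle x hx g hg
    exact hle ((mem_ker_proj Γ).2 fun y hy ↦ hg y (ne_of_mem_of_not_mem hy hx))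
  · intro htriv g hg
    refine Subgroup.pi_mem_of_mulSingle_mem g fun x ↦ ?_
    by_cases hx : x ∈ T
    · simp [(mem_ker_proj Γ).1 hg x hx]
    · exact htriv x hx _ fun y hy ↦ Pi.mulSingle_eq_of_ne hy _

open Classical Representation in
theorem prod_card_div_card_map_proj_eq_sum_finrank [Fintype E] [DecidableEq E]
    [∀ x, Fintype (Γ x)] (H : Subgroup (∀ x, Γ x)) {ι : Type} [Fintype ι] [DecidableEq ι]
    (V : ι → Type) [∀ i, AddCommGroup (V i)] [∀ i, Module ℂ (V i)]
    [∀ i, FiniteDimensional ℂ (V i)]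
    (ρ : ∀ i, Representation ℂ (∀ x, Γ x) (V i)) (hirr : ∀ i, IsIrred (ρ i))
    (e : (⨁ i, V i) ≃ₗ[ℂ] (((∀ x, Γ x) ⧸ H) →₀ ℂ))
    (he : ∀ (g : ∀ x, Γ x) (i : ι) (v : V i),
      e (DirectSum.lof ℂ ι V i (ρ i g v)) =
        (ofMulAction ℂ (∀ x, Γ x) ((∀ x, Γ x) ⧸ H) g
          (MonoidAlgebra.ofCoeff (e (DirectSum.lof ℂ ι V i v)))).coeff)
    (T : Finset E) :
    (∏ x ∈ T, (Nat.card (Γ x) : ℝ)) / Nat.card (H.map (proj Γ T)) =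
      ∑ i, if ∀ x ∉ T, TrivAt Γ (ρ i) x then (Module.finrank ℂ (V i) : ℝ) else 0 := by
  set N := (proj Γ T).ker
  have hdim : (∑ i, if ∀ x ∉ T, TrivAt Γ (ρ i) x then Module.finrank ℂ (V i) else 0) =
      Nat.card (MulAction.orbitRel.Quotient N ((∀ x, Γ x) ⧸ H)) := by
    calc _ = ∑ i, Module.finrank ℂ (invariants ((ρ i).comp N.subtype)) := by
          refine Finset.sum_congr rfl fun i _ ↦ ?_
          rw [(hirr i).finrank_invariants_comp_subtype, ker_proj_le_ker_iff]
          congr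
      _ = Module.finrank ℂ (invariants (ofMulAction ℂ N ((∀ x, Γ x) ⧸ H))) :=
          sum_finrank_invariants_eq_of_linearEquiv _ _
            (e.trans (MonoidAlgebra.coeffLinearEquiv ℂ).symm)
            fun n i v ↦ congrArg MonoidAlgebra.ofCoeff (he n i v)
      _ = _ := finrank_invariants_ofMulAction
  have hcard : Nat.card (MulAction.orbitRel.Quotient N ((∀ x, Γ x) ⧸ H)) *
      Nat.card (H.map (proj Γ T)) = ∏ x ∈ T, Nat.card (Γ x) := by
    rw [card_orbitRel_ker_quotient_eq_index_map (proj_surjective Γ T), Subgroup.index_mul_card,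
      Nat.card_pi, Finset.prod_coe_sort T fun x ↦ Nat.card (Γ x)]
  rw [div_eq_iff (Nat.cast_pos.2 Nat.card_pos).ne']
  exact_mod_cast (congrArg (· * Nat.card (H.map (proj Γ T))) hdim).trans hcard |>.symm

end Proj

section AlternatingSums

open Finset

variable {E : Type} [Fintype E] [DecidableEq E]

theorem rpow_sub_dualRank_eq {b : ℝ} (hb0 : 0 < b) (hb1 : b ≠ 1) {a : E → ℝ} (ha : ∀ x, 0 < a x)
    {c : Finset E → ℝ} (hc : ∀ S, 0 < c S) (hc0 : c ∅ = 1) {r rd : Finset E → ℝ}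
    (hr : ∀ S, r S = Real.logb b (c S))
    (hrd : ∀ S, rd S = r (univ \ S) + ∑ x ∈ S, Real.logb b (a x) - r univ) (S : Finset E) :
    b ^ (rd univ - rd S) = (∏ x ∈ univ \ S, a x) / c (univ \ S) := by
  have hexp : rd univ - rd S = Real.logb b (∏ x ∈ univ \ S, a x) - r (univ \ S) := by
    rw [hrd, hrd, sdiff_self, bot_eq_empty, hr ∅, hc0, Real.logb_one,
      Real.logb_prod _ _ fun x _ ↦ (ha x).ne', sum_sdiff_eq_sub (subset_univ S)]
    ring
  rw [hexp, hr, Real.rpow_sub hb0, Real.rpow_logb hb0 hb1 (prod_pos fun x _ ↦ ha x),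
    Real.rpow_logb hb0 hb1 (hc _)]

theorem sum_powerset_univ_neg_one_pow_mul_ite {R : Type*} [Ring R] (P : E → Prop)
    [DecidablePred P] :
    ∑ S ∈ univ.powerset, (-1 : R) ^ #S * (if ∀ x ∉ univ \ S, P x then 1 else 0) =
      if ∀ x, ¬ P x then 1 else 0 := by
  have hsub (S : Finset E) : (∀ x ∉ univ \ S, P x) ↔ S ⊆ univ.filter P := by
    simp [subset_iff]
  simp only [mul_ite, mul_one, mul_zero, hsub, ← sum_filter]
  rw [show univ.powerset.filter (· ⊆ univ.filter P) = (univ.filter P).powerset by ext; simp]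
  have := congrArg (Int.cast : ℤ → R) (sum_powerset_neg_one_pow_card (x := univ.filter P))
  push_cast at this
  simp [this, filter_eq_empty_iff]

theorem sum_powerset_univ_neg_one_pow_mul_sum_ite {ι R : Type*} [Fintype ι] [Ring R]
    (P : ι → E → Prop) [∀ i, DecidablePred (P i)] (d : ι → R) :
    ∑ S ∈ univ.powerset, (-1 : R) ^ #S * ∑ i, (if ∀ x ∉ univ \ S, P i x then d i else 0) =
      ∑ i, if ∀ x, ¬ P i x then d i else 0 := by
  simp only [mul_sum]
  rw [sum_comm]
  refine sum_congr rfl fun i _ ↦ ?_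
  calc ∑ S ∈ univ.powerset, (-1 : R) ^ #S * (if ∀ x ∉ univ \ S, P i x then d i else 0)
      = (∑ S ∈ univ.powerset, (-1 : R) ^ #S * if ∀ x ∉ univ \ S, P i x then 1 else 0) * d i := by
        rw [sum_mul]
        exact sum_congr rfl fun S _ ↦ by split_ifs <;> simp
    _ = if ∀ x, ¬ P i x then d i else 0 := by
        rw [sum_powerset_univ_neg_one_pow_mul_ite]
        split_ifs <;> simp

theorem sum_powerset_univ_neg_one_pow_succ_mul {R : Type*} [CommRing R] (f : Finset E → R) :
    ∑ S ∈ univ.powerset, (-1 : R) ^ (#S + 1) * f S =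
      (-1) ^ (Fintype.card E + 1) * ∑ S ∈ univ.powerset, (-1) ^ #S * f (univ \ S) := by
  simp only [powerset_univ, mul_sum, ← compl_eq_univ_sdiff]
  rw [← compl_involutive.bijective.sum_comp]
  refine sum_congr rfl fun S _ ↦ ?_
  have hsq : (-1 : R) ^ #S * (-1) ^ #S = 1 := by rw [← mul_pow]; simp
  rw [← card_add_card_compl S, add_assoc, pow_add _ #S]
  linear_combination (-(-1 : R) ^ (#Sᶜ + 1) * f Sᶜ) * hsq

end AlternatingSums

open Classical in
/-- `dim_ℂ H_{n−1}(X/H; ℂ)`, which equals the sum of the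
dimensions of the irreducible constituents `ρ` of `ℂ[G/H]` with
`triv(ρ) = ∅`, equals `χ_{P(H)^{*α}}(b)`; and the reduced Euler characteristic
of `X/H`, computed by the face count `Σ_{S⊆E} (−1)^{|S|−1} |G_S|/|H_S|`,
equals `(−1)^{n−1} χ_{P(H)^{*α}}(b)`. -/
theorem stmt19 {E : Type} [Fintype E] [DecidableEq E]
    (Γ : E → Type) [∀ x, Group (Γ x)] [∀ x, Fintype (Γ x)]
    (H : Subgroup (∀ x, Γ x)) (b : ℝ) (hb : 1 < b)
    (r : Finset E → ℝ)
    (hr : ∀ S : Finset E, r S = Real.logb b (Nat.card (Subgroup.map (proj Γ S) H)))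
    (rd : Finset E → ℝ)
    (hrd : ∀ S : Finset E,
      rd S = r (Finset.univ \ S) +
        (∑ x ∈ S, Real.logb b (Nat.card (Γ x))) - r Finset.univ)
    {ι : Type} [Fintype ι] [DecidableEq ι]
    (V : ι → Type) [∀ i, AddCommGroup (V i)] [∀ i, Module ℂ (V i)]
    [∀ i, FiniteDimensional ℂ (V i)]
    (ρ : ∀ i, Representation ℂ (∀ x, Γ x) (V i))
    (hirr : ∀ i, IsIrred (ρ i))
    (e : (⨁ i, V i) ≃ₗ[ℂ] (((∀ x, Γ x) ⧸ H) →₀ ℂ))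
    (he : ∀ (g : ∀ x, Γ x) (i : ι) (v : V i),
      e (DirectSum.lof ℂ ι V i (ρ i g v)) =
        (Representation.ofMulAction ℂ (∀ x, Γ x) ((∀ x, Γ x) ⧸ H) g
          (MonoidAlgebra.ofCoeff (e (DirectSum.lof ℂ ι V i v)))).coeff) :
    -- dim H_{n-1}(X/H; ℂ) = Σ_{ρ ∈ R(H), triv ρ = ∅} dim ρ = χ_{P*}(b)
    (∑ i : ι,
        if ∀ x : E, ¬ TrivAt Γ (ρ i) x then (Module.finrank ℂ (V i) : ℝ) else 0) =
      ∑ S ∈ Finset.univ.powerset,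
        (-1 : ℝ) ^ S.card * b ^ (rd Finset.univ - rd S) ∧
    -- the reduced Euler characteristic of X/H equals (−1)^{n−1} χ_{P*}(b)
    (∑ S ∈ Finset.univ.powerset, (-1 : ℝ) ^ (S.card + 1) *
        ((∏ x ∈ S, (Nat.card (Γ x) : ℝ)) /
          (Nat.card (Subgroup.map (proj Γ S) H) : ℝ))) =
      (-1 : ℝ) ^ (Fintype.card E + 1) *
        ∑ S ∈ Finset.univ.powerset,
          (-1 : ℝ) ^ S.card * b ^ (rd Finset.univ - rd S) := by
  have hface := prod_card_div_card_map_proj_eq_sum_finrank Γ H V ρ hirr e he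
  have hpow : ∀ S, b ^ (rd Finset.univ - rd S) =
      (∏ x ∈ Finset.univ \ S, (Nat.card (Γ x) : ℝ)) /
        Nat.card (Subgroup.map (proj Γ (Finset.univ \ S)) H) :=
    rpow_sub_dualRank_eq (a := fun x ↦ (Nat.card (Γ x) : ℝ))
      (c := fun S ↦ (Nat.card (H.map (proj Γ S)) : ℝ)) (by linarith) hb.ne'
      (fun x ↦ Nat.cast_pos.2 Nat.card_pos) (fun S ↦ Nat.cast_pos.2 Nat.card_pos)
      (by exact_mod_cast card_map_proj_empty Γ H) hr hrd
  constructor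
  · simp only [hpow, hface]
    exact (sum_powerset_univ_neg_one_pow_mul_sum_ite _ _).symm
  · rw [sum_powerset_univ_neg_one_pow_succ_mul]
    simp only [hpow]
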